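/- The flip (α,β) ↦ (β,α) of cyclic pairs sends neat pairs to neat pairs and is compatible with the equivalence relation ∼ (generated by (aα,β) ∼ (α,βa) and (αb,β) ∼ (α,bβ)); hence it induces an involution σ on the set N of neat equivalence classes. Moreover ψ_{σ(N)} = ψ_N* (the transpose of ψ_N under the identification DDA ≅ A). -/

import Mathlib

/-!  Basic combinatorics of a quiver given by source/target maps `s t : A → V`.
A path of positive length is a list of arrows `[a₁, …, aₙ]` written in order of
traversal (so the written path `aₙ … a₁` of the paper corresponds to the list
`[a₁, …, aₙ]`).  -/

namespace Monomial

variable {V A : Type*}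

/-- `l` is a path: consecutive arrows are composable. -/
def IsPath (s t : A → V) (l : List A) : Prop := l.Chain' fun a b => t a = s b

/-- Source of a (nonempty) path. -/
def srcOf (s : A → V) (l : List A) : Option V := l.head?.map s

/-- Target of a (nonempty) path. -/
def tgtOf (t : A → V) (l : List A) : Option V := l.getLast?.map t

/-- `l` is a nontrivial cycle. -/
def IsCycleList (s t : A → V) (l : List A) : Prop :=
  l ≠ [] ∧ IsPath s t l ∧ tgtOf t l = srcOf s l

/-- `Z` is a minimal set of path relations of length at least two. -/
def MinimalRels (s t : A → V) (Z : Set (List A)) : Prop :=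
  ∀ z ∈ Z, IsPath s t z ∧ 2 ≤ z.length ∧ ∀ w ∈ Z, w <:+: z → w = z

/-- `l` belongs to `B`: it is a path containing no subpath from `Z`
(the basis of the monomial algebra, positive length part). -/
def InB (s t : A → V) (Z : Set (List A)) (l : List A) : Prop :=
  IsPath s t l ∧ ∀ z ∈ Z, ¬ z <:+: l

/-- `(a, β)` is a cyclic pair in `Q₁ ⊙ B` (if `β = []` it stands for the
trivial path at `s a = t a`). -/
def PairOK (s t : A → V) (Z : Set (List A)) (p : A × List A) : Prop :=
  InB s t Z p.2 ∧ IsCycleList s t (p.2 ++ [p.1])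

/-- The set `W` of cycles containing precisely one subpath from `Z`,
located at their end (for a written cycle `γ = ξα`, the list is `α ++ ξ`). -/
def InW (s t : A → V) (Z : Set (List A)) (l : List A) : Prop :=
  IsCycleList s t l ∧
    ∃ ξ ∈ Z, (∃ α, l = α ++ ξ) ∧ ∀ z ∈ Z, ∀ p q, l = p ++ z ++ q → z = ξ ∧ q = []

/-- Two cycles are in the same circuit iff they are related by rotation. -/
def RotEquiv (l₁ l₂ : List A) : Prop := ∃ n, l₁.rotate n = l₂

end Monomial

namespace Monomial

open Classical

variable {V A : Type*}

/-- The basis of the finite-dimensional monomial algebra `A = kQ/⟨Z⟩`: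
a basis element is either a vertex (trivial path) or a nonzero path. -/
def PB (s t : A → V) (Z : Set (List A)) : Type _ :=
  V ⊕ {l : List A // l ≠ [] ∧ InB s t Z l}

/-- Source vertex of a basis element. -/
def srcP (s t : A → V) (Z : Set (List A)) : PB s t Z → V
  | .inl u => u
  | .inr l => s (l.1.head l.2.1)

/-- Target vertex of a basis element. -/
def tgtP (s t : A → V) (Z : Set (List A)) : PB s t Z → V
  | .inl u => u
  | .inr l => t (l.1.getLast l.2.1)

/-- Underlying list of arrows of a basis element. -/
def toListP (s t : A → V) (Z : Set (List A)) : PB s t Z → List A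
  | .inl _ => []
  | .inr l => l.1

/-- The product `p·q` of two basis elements of the monomial algebra (`q` is
applied first); `none` means the product is zero in `A`. -/
noncomputable def comp (s t : A → V) (Z : Set (List A)) :
    PB s t Z → PB s t Z → Option (PB s t Z)
  | .inl u, .inl v => if u = v then some (.inl u) else none
  | .inl u, .inr l => if t (l.1.getLast l.2.1) = u then some (.inr l) else none
  | .inr l, .inl v => if s (l.1.head l.2.1) = v then some (.inr l) else none
  | .inr l, .inr m =>
      if h : InB s t Z (m.1 ++ l.1) then
        some (.inr ⟨m.1 ++ l.1, fun hc => m.2.1 (List.append_eq_nil_iff.mp hc).1, h⟩)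
      else none

variable (s t : A → V) (Z : Set (List A)) (k : Type*) [Field k]

/-- Both `A` and its dual bimodule `DA` are modelled on the space of
`k`-valued functions on the basis `PB s t Z` (for `DA`, the coordinates are
taken in the dual basis `B*`). -/
abbrev MSp := PB s t Z → k

/-- The basis element `γ` of `A`, and at the same time the dual basis element
`γ*` of `DA`. -/
noncomputable def db (γ : PB s t Z) : MSp s t Z k := fun x => if x = γ then 1 else 0

variable [Fintype (PB s t Z)]

/-- Generic linear map on `MSp` determined by a relation: `f ↦ (x ↦ Σ_{R x γ} f γ)`. -/
noncomputable def sumByRel (R : PB s t Z → PB s t Z → Prop) :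
    MSp s t Z k →ₗ[k] MSp s t Z k where
  toFun f x := ∑ γ, if R x γ then f γ else 0
  map_add' f g := by
    funext x
    simp only [Pi.add_apply]
    rw [← Finset.sum_add_distrib]
    exact Finset.sum_congr rfl fun γ _ => by split <;> simp
  map_smul' c f := by
    funext x
    simp only [Pi.smul_apply, smul_eq_mul, RingHom.id_apply]
    rw [Finset.mul_sum]
    exact Finset.sum_congr rfl fun γ _ => by split <;> simp

/-- The two-sided bimodule action `p·f·q` on `DA`: `(p·f·q)(x) = f(q·x·p)`. -/
noncomputable def actLR (p q : PB s t Z) : MSp s t Z k →ₗ[k] MSp s t Z k :=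
  sumByRel s t Z k fun x γ =>
    ((comp s t Z x p).bind fun y => comp s t Z q y) = some γ

/-- The left action `f ↦ p·f` on `DA`: `(p·f)(x) = f(x·p)`. -/
noncomputable def actLin (p : PB s t Z) : MSp s t Z k →ₗ[k] MSp s t Z k :=
  sumByRel s t Z k fun x γ => comp s t Z x p = some γ

/-- The right action `f ↦ f·p` on `DA`: `(f·p)(x) = f(p·x)`. -/
noncomputable def actRlin (p : PB s t Z) : MSp s t Z k →ₗ[k] MSp s t Z k :=
  sumByRel s t Z k fun x γ => comp s t Z p x = some γ

/-- Left multiplication `y ↦ p·y` on `A`. -/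
noncomputable def mulLin (p : PB s t Z) : MSp s t Z k →ₗ[k] MSp s t Z k :=
  sumByRel s t Z k fun r q => comp s t Z p q = some r

/-- Right multiplication `y ↦ y·p` on `A`. -/
noncomputable def mulRlin (p : PB s t Z) : MSp s t Z k →ₗ[k] MSp s t Z k :=
  sumByRel s t Z k fun r q => comp s t Z q p = some r

variable {s t Z}

/-- `(α, β)` is a cyclic pair: `t(β) = s(α)` and `t(α) = s(β)`. -/
def IsCyclicPairPB (α β : PB s t Z) : Prop :=
  tgtP s t Z β = srcP s t Z α ∧ tgtP s t Z α = srcP s t Z β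

/-- A cyclic pair `(α, β) ∈ B ⊙ B` is neat if any arrow extending `β` inside
`B` is the corresponding extremal arrow of `α`, and vice versa. -/
def IsNeatPB (α β : PB s t Z) : Prop :=
  (∀ a : A, t a = srcP s t Z β ∧ InB s t Z (a :: toListP s t Z β) →
    (toListP s t Z α).getLast? = some a) ∧
  (∀ a : A, s a = tgtP s t Z β ∧ InB s t Z (toListP s t Z β ++ [a]) →
    (toListP s t Z α).head? = some a) ∧
  (∀ b : A, t b = srcP s t Z α ∧ InB s t Z (b :: toListP s t Z α) →
    (toListP s t Z β).getLast? = some b) ∧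
  (∀ b : A, s b = tgtP s t Z α ∧ InB s t Z (toListP s t Z α ++ [b]) →
    (toListP s t Z β).head? = some b)

/-- The elementary relation on cyclic pairs in `B ⊙ B`:
`(aα, β) ∼ (α, βa)` and `(αb, β) ∼ (α, bβ)`. -/
def ElemRelPB (p q : PB s t Z × PB s t Z) : Prop :=
  IsCyclicPairPB p.1 p.2 ∧ IsCyclicPairPB q.1 q.2 ∧
    ((∃ a : A, toListP s t Z p.1 = toListP s t Z q.1 ++ [a] ∧
        toListP s t Z q.2 = a :: toListP s t Z p.2) ∨
     (∃ b : A, toListP s t Z p.1 = b :: toListP s t Z q.1 ∧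
        toListP s t Z q.2 = toListP s t Z p.2 ++ [b]))

/-- `N` is a neat equivalence class: an equivalence class of cyclic pairs under
the relation generated by the elementary relations, all of whose members are
neat cyclic pairs. -/
def NeatClass (N : Set (PB s t Z × PB s t Z)) : Prop :=
  ∃ p : PB s t Z × PB s t Z, IsCyclicPairPB p.1 p.2 ∧
    N = {q | Relation.EqvGen ElemRelPB p q} ∧
    ∀ q ∈ N, IsNeatPB q.1 q.2

variable (s t Z)

/-- `ψ_N(γ*) = Σ_{(γ,δ) ∈ N} δ`, the value of `ψ_N` on a dual basis vector. -/
noncomputable def psiTarget (N : Set (PB s t Z × PB s t Z)) (γ : PB s t Z) :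
    MSp s t Z k :=
  fun δ => if (γ, δ) ∈ N then 1 else 0

/-- The linear map `ψ_N : DA → A`. -/
noncomputable def psiLin (N : Set (PB s t Z × PB s t Z)) :
    MSp s t Z k →ₗ[k] MSp s t Z k :=
  sumByRel s t Z k fun δ γ => (γ, δ) ∈ N

/-- `φ : DA → A` is a morphism of `A–A`-bimodules. -/
def IsBimodMap (φ : MSp s t Z k →ₗ[k] MSp s t Z k) : Prop :=
  ∀ p : PB s t Z,
    φ ∘ₗ actLin s t Z k p = mulLin s t Z k p ∘ₗ φ ∧
    φ ∘ₗ actRlin s t Z k p = mulRlin s t Z k p ∘ₗ φ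

/-- The space `Hom_{A-A}(DA, A)` of bimodule morphisms. -/
noncomputable def BimodHoms :
    Submodule k (MSp s t Z k →ₗ[k] MSp s t Z k) where
  carrier := {φ | IsBimodMap s t Z k φ}
  zero_mem' := by
    intro p
    constructor <;> simp [LinearMap.zero_comp, LinearMap.comp_zero]
  add_mem' := by
    intro a b ha hb p
    exact ⟨by rw [LinearMap.add_comp, LinearMap.comp_add, (ha p).1, (hb p).1],
      by rw [LinearMap.add_comp, LinearMap.comp_add, (ha p).2, (hb p).2]⟩
  smul_mem' := by
    intro c x hx p
    exact ⟨by rw [LinearMap.smul_comp, LinearMap.comp_smul, (hx p).1],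
      by rw [LinearMap.smul_comp, LinearMap.comp_smul, (hx p).2]⟩

/-- The space `Alt(DA) = {φ ∈ Hom_{A-A}(DA, A) : φ + φ* = 0}`, where `φ*` is
the transpose of `φ` (in the bases `B*` and `B`): the condition `φ + φ* = 0`
reads `φ(γ*)_δ + φ(δ*)_γ = 0` for all `γ, δ ∈ B`. -/
noncomputable def AltHoms :
    Submodule k (MSp s t Z k →ₗ[k] MSp s t Z k) where
  carrier := {φ | IsBimodMap s t Z k φ ∧
    ∀ γ δ : PB s t Z, φ (db s t Z k γ) δ + φ (db s t Z k δ) γ = 0}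
  zero_mem' := by
    refine ⟨fun p => ?_, fun γ δ => by simp⟩
    constructor <;> simp [LinearMap.zero_comp, LinearMap.comp_zero]
  add_mem' := by
    intro a b ha hb
    refine ⟨fun p => ⟨?_, ?_⟩, fun γ δ => ?_⟩
    · rw [LinearMap.add_comp, LinearMap.comp_add, (ha.1 p).1, (hb.1 p).1]
    · rw [LinearMap.add_comp, LinearMap.comp_add, (ha.1 p).2, (hb.1 p).2]
    · have h1 := ha.2 γ δ
      have h2 := hb.2 γ δ
      simp only [LinearMap.add_apply, Pi.add_apply]
      linear_combination h1 + h2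
  smul_mem' := by
    intro c x hx
    refine ⟨fun p => ⟨?_, ?_⟩, fun γ δ => ?_⟩
    · rw [LinearMap.smul_comp, LinearMap.comp_smul, (hx.1 p).1]
    · rw [LinearMap.smul_comp, LinearMap.comp_smul, (hx.1 p).2]
    · have h := hx.2 γ δ
      simp only [LinearMap.smul_apply, Pi.smul_apply, smul_eq_mul]
      linear_combination c * h

end Monomial

/-! The flip permutes the four clauses of neatness and exchanges the two kinds of
elementary moves, so it preserves neat pairs and `∼`-classes. Since the matrix of `ψ_N`
in the bases `B*`, `B` is the indicator of `N`, transposing it replaces `N` by its flip. -/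

namespace Monomial

variable {V A : Type*} {s t : A → V} {Z : Set (List A)}

theorem IsNeatPB.swap {α β : PB s t Z} (h : IsNeatPB α β) : IsNeatPB β α :=
  ⟨h.2.2.1, h.2.2.2, h.1, h.2.1⟩

theorem IsCyclicPairPB.swap {α β : PB s t Z} (h : IsCyclicPairPB α β) :
    IsCyclicPairPB β α :=
  ⟨h.2, h.1⟩

theorem ElemRelPB.swap {p q : PB s t Z × PB s t Z} (h : ElemRelPB p q) :
    ElemRelPB q.swap p.swap := by
  obtain ⟨hp, hq, ⟨a, h₁, h₂⟩ | ⟨b, h₁, h₂⟩⟩ := h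
  · exact ⟨hq.swap, hp.swap, .inr ⟨a, h₂, h₁⟩⟩
  · exact ⟨hq.swap, hp.swap, .inl ⟨b, h₂, h₁⟩⟩

theorem eqvGen_elemRelPB_swap {p q : PB s t Z × PB s t Z}
    (h : Relation.EqvGen ElemRelPB p q) : Relation.EqvGen ElemRelPB p.swap q.swap := by
  induction h with
  | rel x y hxy => exact (Relation.EqvGen.rel _ _ hxy.swap).symm
  | refl x => exact .refl _
  | symm x y _ ih => exact ih.symm
  | trans x y z _ _ ih₁ ih₂ => exact ih₁.trans _ _ _ ih₂

theorem image_swap_setOf_eqvGen_elemRelPB (p : PB s t Z × PB s t Z) :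
    Prod.swap '' {q | Relation.EqvGen ElemRelPB p q} =
      {q | Relation.EqvGen ElemRelPB p.swap q} := by
  rw [Set.image_swap_eq_preimage_swap]
  ext q
  exact ⟨fun h => by simpa using eqvGen_elemRelPB_swap h,
    fun h => by simpa using eqvGen_elemRelPB_swap h⟩

theorem NeatClass.image_swap {N : Set (PB s t Z × PB s t Z)} (hN : NeatClass N) :
    NeatClass (Prod.swap '' N) := by
  obtain ⟨p, hp, rfl, hneat⟩ := hN
  refine ⟨p.swap, hp.swap, image_swap_setOf_eqvGen_elemRelPB p, ?_⟩
  rintro _ ⟨q, hq, rfl⟩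
  exact (hneat q hq).swap

variable (k : Type*) [Field k] [Fintype (PB s t Z)]

open Classical in
theorem sumByRel_db_apply (R : PB s t Z → PB s t Z → Prop) (γ x : PB s t Z) :
    sumByRel s t Z k R (db s t Z k γ) x = if R x γ then 1 else 0 := by
  simp only [sumByRel, db, LinearMap.coe_mk, AddHom.coe_mk]
  rw [Finset.sum_eq_single γ (fun y _ hy => by simp [hy]) (by simp)]
  simp

theorem psiLin_image_swap_db_apply (N : Set (PB s t Z × PB s t Z)) (γ δ : PB s t Z) :
    psiLin s t Z k (Prod.swap '' N) (db s t Z k γ) δ = psiLin s t Z k N (db s t Z k δ) γ := by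
  simp only [psiLin, sumByRel_db_apply, Set.image_swap_eq_preimage_swap, Set.mem_preimage,
    Prod.swap_prod_mk]

end Monomial

open Monomial in
theorem flip_involution_and_transpose_general {V A k : Type*} [Field k] (s t : A → V)
    (Z : Set (List A)) [Fintype (PB s t Z)] :
    (∀ α β : PB s t Z, IsNeatPB α β → IsNeatPB β α) ∧
    (∀ p q : PB s t Z × PB s t Z, Relation.EqvGen ElemRelPB p q →
      Relation.EqvGen ElemRelPB p.swap q.swap) ∧
    (∀ N : Set (PB s t Z × PB s t Z), NeatClass N → NeatClass (Prod.swap '' N)) ∧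
    (∀ N : Set (PB s t Z × PB s t Z), NeatClass N →
      Prod.swap '' (Prod.swap '' N) = N) ∧
    (∀ N : Set (PB s t Z × PB s t Z), NeatClass N → ∀ γ δ : PB s t Z,
      psiLin s t Z k (Prod.swap '' N) (db s t Z k γ) δ =
        psiLin s t Z k N (db s t Z k δ) γ) :=
  ⟨fun _ _ => IsNeatPB.swap, fun _ _ => eqvGen_elemRelPB_swap, fun _ => NeatClass.image_swap,
    fun N _ => by rw [Set.image_image, Set.image_congr' Prod.swap_swap, Set.image_id'],
    fun N _ => psiLin_image_swap_db_apply k N⟩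

open Monomial in
/-- the flip `(α,β) ↦ (β,α)` of cyclic pairs sends neat pairs to
neat pairs and is compatible with the equivalence relation `∼`; hence it
induces an involution `σ` on the set of neat equivalence classes, and
`ψ_{σ(N)} = (ψ_N)*` (the transpose, read off coefficientwise in the bases
`B*` and `B`). -/
theorem flip_involution_and_transpose {V A k : Type*} [Field k] (s t : A → V)
    (Z : Set (List A)) (hZ : MinimalRels s t Z) [Fintype (PB s t Z)] :
    (∀ α β : PB s t Z, IsNeatPB α β → IsNeatPB β α) ∧
    (∀ p q : PB s t Z × PB s t Z, Relation.EqvGen ElemRelPB p q →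
      Relation.EqvGen ElemRelPB p.swap q.swap) ∧
    (∀ N : Set (PB s t Z × PB s t Z), NeatClass N → NeatClass (Prod.swap '' N)) ∧
    (∀ N : Set (PB s t Z × PB s t Z), NeatClass N →
      Prod.swap '' (Prod.swap '' N) = N) ∧
    (∀ N : Set (PB s t Z × PB s t Z), NeatClass N → ∀ γ δ : PB s t Z,
      psiLin s t Z k (Prod.swap '' N) (db s t Z k γ) δ =
        psiLin s t Z k N (db s t Z k δ) γ) :=
  flip_involution_and_transpose_general s t Z
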